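/- Let m ≥ 2 and let u, v be words with |c(u)| ≥ 2 and |c(v)| ≥ 2. If i_m(u) = i_m(v), then i_m(s(u)) = i_m(s(v)). (Equivalently, by the Gerhard–Petrich solution of the word problem for ℬ_m: if the band variety ℬ_m satisfies the identity u ≈ v, where both u and v contain at least two distinct letters, then ℬ_m satisfies s(u) ≈ s(v).) -/

import Mathlib

/-! ### Words and word functions -/

/-- The word `w^{(i j)}`: replace every occurrence of the letter `i` by `j`. -/
def subst {X : Type*} [DecidableEq X] (w : List X) (i j : X) : List X :=
  w.map fun t => if t = i then j else t

/-- The prefix `s(w)`: the longest prefix of `w` containing all but one of the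
letters of `c(w)` (the empty word if `w` is empty). -/
def wordS {X : Type*} [DecidableEq X] (w : List X) : List X :=
  w.take (w.toFinset.sup fun x => w.idxOf x)

/-- The letter `σ(w)` (the last letter of `w` to occur from the left), as a word of
length at most one; `s(w) ++ σ(w)` is the shortest prefix of `w` with full content. -/
def wordSigma {X : Type*} [DecidableEq X] (w : List X) : List X :=
  (w.drop (w.toFinset.sup fun x => w.idxOf x)).take 1

/-- The suffix `e(w)`, dual to `s(w)`. -/
def wordE {X : Type*} [DecidableEq X] (w : List X) : List X :=
  (wordS w.reverse).reverse

/-- The letter `ε(w)` (as a word of length at most one), dual to `σ(w)`. -/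
def wordEps {X : Type*} [DecidableEq X] (w : List X) : List X :=
  (wordSigma w.reverse).reverse

/-- The initial part `i₂(w)`: retain only the first occurrence from the left of
each letter of `w`. -/
def initPart {X : Type*} [DecidableEq X] (w : List X) : List X :=
  w.reverse.dedup.reverse

/-- The dual `F̄` of a word function `F`: `F̄(w) = reverse (F (reverse w))`. -/
def dualW {X : Type*} (F : List X → List X) (w : List X) : List X :=
  (F w.reverse).reverse

theorem wordS_length_lt {X : Type*} [DecidableEq X] {w : List X} (hw : w ≠ []) :
    (wordS w).length < w.length := by
  have hpos : 0 < w.length := List.length_pos_iff.mpr hw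
  have hk : (w.toFinset.sup fun x => w.idxOf x) < w.length := by
    rw [Finset.sup_lt_iff hpos]
    intro x hx
    exact List.idxOf_lt_length_iff.mpr (List.mem_toFinset.mp hx)
  simp only [wordS, List.length_take]
  omega

/-- The common recursion defining the word functions `h_m` and `i_m` of Gerhard
and Petrich: `t_m(w) = t_m(s(w)) · σ(w) · t̄_{m-1}(w)` for `m ≥ 3`, where the base
function (`h₂` = first letter, `i₂` = initial part) is a parameter, and all
functions send the empty word to the empty word. -/
def tW {X : Type*} [DecidableEq X] (base : List X → List X) : ℕ → List X → List X
  | m, w =>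
    if hw : w = [] then []
    else if hm : m ≤ 2 then base w
    else tW base m (wordS w) ++ wordSigma w ++ (tW base (m - 1) w.reverse).reverse
termination_by m w => m + w.length
decreasing_by
  · have := wordS_length_lt hw; omega
  · have : w.attach.reverse.unattach.length = w.length := by simp
    omega

/-- The word function `h_m` (`m ≥ 2`): `h₂(w)` is the first letter of `w`, and
`h_m(w) = h_m(s(w)) · σ(w) · h̄_{m-1}(w)` for `m ≥ 3`. -/
def hW {X : Type*} [DecidableEq X] : ℕ → List X → List X :=
  tW fun w => w.take 1

/-- The word function `i_m` (`m ≥ 2`): `i₂(w)` is the initial part of `w`, and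
`i_m(w) = i_m(s(w)) · σ(w) · ī_{m-1}(w)` for `m ≥ 3`. -/
def iW {X : Type*} [DecidableEq X] : ℕ → List X → List X :=
  tW initPart

/-! ### Operations induced by words -/

/-- Evaluation of a word `w` over the alphabet `X` in a semigroup `S` under the
assignment `a : X → S`, computed in the monoid `WithOne S` (so that the empty word
evaluates to `1` and a nonempty word to the coercion of its value in `S`). -/
def evalW {X S : Type*} [Semigroup S] (a : X → S) (w : List X) : WithOne S :=
  (w.map fun t => (a t : WithOne S)).prod

/-- The identification minor `f_{i j}` of an `n`-ary operation: the `i`-th argument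
is replaced by the `j`-th. -/
def minor {α β : Type*} {n : ℕ} (f : (Fin n → α) → β) (i j : Fin n) :
    (Fin n → α) → β :=
  fun a => f (Function.update a i (a j))

/-- `f` depends on its `i`-th variable. -/
def DependsOnVar {α β : Type*} {n : ℕ} (f : (Fin n → α) → β) (i : Fin n) : Prop :=
  ∃ a b : Fin n → α, (∀ k : Fin n, k ≠ i → a k = b k) ∧ f a ≠ f b

/-- `f : Sⁿ → S` is induced by a (nonempty) word over `X_n = {x_1, …, x_n}`. -/
def InducedByWord {S : Type*} [Semigroup S] {n : ℕ} (f : (Fin n → S) → S) : Prop :=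
  ∃ w : List (Fin n), w ≠ [] ∧ ∀ a : Fin n → S, (f a : WithOne S) = evalW a w


namespace GPaux
variable {X : Type*} [DecidableEq X]

/-- The index of the first occurrence of the last-occurring-first letter. -/
abbrev kk (w : List X) : ℕ := w.toFinset.sup fun x => w.idxOf x

lemma kk_lt {w : List X} (hw : w ≠ []) : kk w < w.length := by
  rw [kk, Finset.sup_lt_iff (List.length_pos_iff.mpr hw)]
  intro x hx
  exact List.idxOf_lt_length_iff.mpr (List.mem_toFinset.mp hx)

lemma indexOf_getElem_kk {w : List X} (hw : w ≠ []) :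
    w.idxOf (w[kk w]'(kk_lt hw)) = kk w := by
  have hne : w.toFinset.Nonempty := by
    obtain ⟨a, t, rfl⟩ := List.exists_cons_of_ne_nil hw
    exact ⟨a, by simp⟩
  obtain ⟨y, hy, hky⟩ := Finset.exists_mem_eq_sup w.toFinset hne fun x => w.idxOf x
  have hylt : w.idxOf y < w.length :=
    List.idxOf_lt_length_iff.mpr (List.mem_toFinset.mp hy)
  have : w[kk w]'(kk_lt hw) = y := by
    have := List.getElem_idxOf (x := y) (xs := w) hylt
    simp only [kk, hky]
    exact this
  rw [this, ← hky]

lemma sigma_not_mem_wordS {w : List X} (hw : w ≠ []) :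
    w[kk w]'(kk_lt hw) ∉ wordS w := by
  intro hmem
  set σ := w[kk w]'(kk_lt hw) with hσ
  have h1 : w.idxOf σ = kk w := indexOf_getElem_kk hw
  have h2 : w.idxOf σ = (w.take (kk w)).idxOf σ := by
    conv_lhs => rw [← List.take_append_drop (kk w) w]
    exact List.idxOf_append_of_mem hmem
  have h3 : (w.take (kk w)).idxOf σ < (w.take (kk w)).length :=
    List.idxOf_lt_length_iff.mpr hmem
  have h4 : (w.take (kk w)).length ≤ kk w := by
    simp [List.length_take]
  omega

lemma mem_wordS_or {w : List X} (hw : w ≠ []) {x : X} (hx : x ∈ w) :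
    x ∈ wordS w ∨ x = w[kk w]'(kk_lt hw) := by
  have h1 : w.idxOf x ≤ kk w :=
    Finset.le_sup (f := fun x => w.idxOf x) (List.mem_toFinset.mpr hx)
  rcases lt_or_eq_of_le h1 with h | h
  · left
    have hlt : w.idxOf x < w.length := List.idxOf_lt_length_iff.mpr hx
    have hlen : w.idxOf x < (w.take (kk w)).length := by
      rw [List.length_take]; exact lt_min h hlt
    rw [wordS]
    refine List.mem_iff_getElem.mpr ⟨w.idxOf x, hlen, ?_⟩
    rw [List.getElem_take]
    exact List.getElem_idxOf hlt
  · right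
    have := List.getElem_idxOf (x := x) (xs := w) (List.idxOf_lt_length_iff.mpr hx)
    rw [← this]
    congr 1

lemma wordSigma_eq {w : List X} (hw : w ≠ []) :
    wordSigma w = [w[kk w]'(kk_lt hw)] := by
  rw [wordSigma, List.drop_eq_getElem_cons (kk_lt hw)]
  rfl

lemma mem_initPart {w : List X} {x : X} : x ∈ initPart w ↔ x ∈ w := by
  simp [initPart]

lemma initPart_idem (w : List X) : initPart (initPart w) = initPart w := by
  simp [initPart, List.dedup_idem]

lemma dedup_append_of_subset {a b : List X} (h : ∀ x ∈ a, x ∈ b) :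
    (a ++ b).dedup = b.dedup := by
  induction a with
  | nil => rfl
  | cons y a ih =>
    rw [List.cons_append, List.dedup_cons_of_mem
      (List.mem_append_right a (h y (List.mem_cons_self)))]
    exact ih fun x hx => h x (List.mem_cons_of_mem _ hx)

lemma initPart_append_of_subset {a b : List X} (h : ∀ x ∈ b, x ∈ a) :
    initPart (a ++ b) = initPart a := by
  simp only [initPart, List.reverse_append]
  rw [dedup_append_of_subset]
  intro x hx
  exact List.mem_reverse.mpr (h x (List.mem_reverse.mp hx))

lemma initPart_concat_of_not_mem {a : List X} {x : X} (hx : x ∉ a) :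
    initPart (a ++ [x]) = initPart a ++ [x] := by
  simp only [initPart, List.reverse_append, List.reverse_singleton,
    List.singleton_append]
  rw [List.dedup_cons_of_notMem (by simpa using hx)]
  simp

lemma initPart_decomp {w : List X} (hw : w ≠ []) :
    initPart w = initPart (wordS w) ++ wordSigma w := by
  have hk := kk_lt hw
  have hw' : w = (wordS w ++ [w[kk w]'hk]) ++ w.drop (kk w + 1) := by
    rw [wordS, List.append_assoc, List.singleton_append,
      ← List.drop_eq_getElem_cons hk, List.take_append_drop]
  conv_lhs => rw [hw']
  rw [initPart_append_of_subset, wordSigma_eq hw,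
    initPart_concat_of_not_mem (sigma_not_mem_wordS hw)]
  intro x hx
  have hxw : x ∈ w := by
    rw [hw']
    exact List.mem_append_right _ hx
  rcases mem_wordS_or hw hxw with h | h
  · exact List.mem_append_left _ h
  · exact List.mem_append_right _ (by simp [h])

lemma iW_of_le_two {m : ℕ} (hm : m ≤ 2) (w : List X) : iW m w = initPart w := by
  rw [iW, tW]
  rcases eq_or_ne w [] with rfl | hw
  · simp [initPart]
  · simp [hw, hm]

lemma iW_unfold {m : ℕ} (hm : ¬ m ≤ 2) {w : List X} (hw : w ≠ []) :
    iW m w = iW m (wordS w) ++ wordSigma w ++ (iW (m - 1) w.reverse).reverse := by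
  conv_lhs => rw [iW, tW]
  simp [hw, hm, iW]

lemma initPart_iW (m : ℕ) (w : List X) : initPart (iW m w) = initPart w := by
  rcases eq_or_ne w [] with rfl | hw
  · rw [iW, tW]; simp
  rcases le_or_gt m 2 with hm | hm
  · rw [iW_of_le_two hm, initPart_idem]
  · have hm' : ¬ m ≤ 2 := not_le.mpr hm
    rw [iW_unfold hm' hw, wordSigma_eq hw]
    have ihS : initPart (iW m (wordS w)) = initPart (wordS w) :=
      initPart_iW m (wordS w)
    have ihR : initPart (iW (m - 1) w.reverse) = initPart w.reverse :=
      initPart_iW (m - 1) w.reverse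
    have hmemS : ∀ x, x ∈ iW m (wordS w) ↔ x ∈ wordS w := by
      intro x
      rw [← mem_initPart, ihS, mem_initPart]
    have hmemR : ∀ x, x ∈ iW (m - 1) w.reverse → x ∈ w := by
      intro x hx
      have : x ∈ initPart (iW (m - 1) w.reverse) := mem_initPart.mpr hx
      rw [ihR] at this
      exact List.mem_reverse.mp (mem_initPart.mp this)
    rw [List.append_assoc, List.singleton_append,
      ← List.singleton_append (l := (iW (m-1) w.reverse).reverse),
      ← List.append_assoc]
    rw [initPart_append_of_subset, initPart_concat_of_not_mem,
      ihS, initPart_decomp hw, wordSigma_eq hw]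
    · intro hc
      exact sigma_not_mem_wordS hw ((hmemS _).mp hc)
    · intro x hx
      have hxw : x ∈ w := hmemR x (List.mem_reverse.mp hx)
      rcases mem_wordS_or hw hxw with h | h
      · exact List.mem_append_left _ ((hmemS x).mpr h)
      · exact List.mem_append_right _ (by simp [h])
termination_by m + w.length
decreasing_by
  · have := wordS_length_lt hw; omega
  · simp only [List.length_reverse]; omega

lemma takeWhile_sandwich {p : X → Bool} {a r : List X} {x : X}
    (ha : ∀ y ∈ a, p y = true) (hx : p x = false) :
    (a ++ x :: r).takeWhile p = a := by
  induction a with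
  | nil => simp [List.takeWhile_cons, hx]
  | cons y a ih =>
    rw [List.cons_append, List.takeWhile_cons,
      if_pos (ha y (List.mem_cons_self)),
      ih fun z hz => ha z (List.mem_cons_of_mem _ hz)]

end GPaux

/-- If `m ≥ 2` and `u, v` are words each containing at least two
distinct letters, then `i_m(u) = i_m(v)` implies `i_m(s(u)) = i_m(s(v))`; i.e. if
the band variety `ℬ_m` satisfies `u ≈ v` then it satisfies `s(u) ≈ s(v)`. -/
theorem iW_s_of_iW {X : Type*} [DecidableEq X] (m : ℕ) (hm : 2 ≤ m)
    (u v : List X) (hu : 2 ≤ u.toFinset.card) (hv : 2 ≤ v.toFinset.card)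
    (h : iW m u = iW m v) :
    iW m (wordS u) = iW m (wordS v) := by
  classical
  open GPaux in
  have hu0 : u ≠ [] := by
    intro h0; rw [h0] at hu; simp at hu
  have hv0 : v ≠ [] := by
    intro h0; rw [h0] at hv; simp at hv
  have hinit : initPart u = initPart v := by
    rw [← GPaux.initPart_iW m u, ← GPaux.initPart_iW m v, h]
  have hdu := GPaux.initPart_decomp hu0
  have hdv := GPaux.initPart_decomp hv0
  have hσu := GPaux.wordSigma_eq hu0
  have hσv := GPaux.wordSigma_eq hv0
  have hσeq : u[GPaux.kk u]'(GPaux.kk_lt hu0) = v[GPaux.kk v]'(GPaux.kk_lt hv0) := by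
    have h1 : initPart (wordS u) ++ [u[GPaux.kk u]'(GPaux.kk_lt hu0)]
        = initPart (wordS v) ++ [v[GPaux.kk v]'(GPaux.kk_lt hv0)] := by
      rw [← hσu, ← hσv, ← hdu, ← hdv, hinit]
    have := congrArg List.getLast? h1
    rw [List.getLast?_concat, List.getLast?_concat] at this
    exact Option.some_injective _ this
  rcases le_or_gt m 2 with hm2 | hm2
  · rw [GPaux.iW_of_le_two hm2, GPaux.iW_of_le_two hm2]
    apply List.append_cancel_right (bs := [u[GPaux.kk u]'(GPaux.kk_lt hu0)])
    rw [← hσu, ← hdu, hinit, hdv, hσv, ← hσeq, ← hσu]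
  · have hm' : ¬ m ≤ 2 := not_le.mpr hm2
    set σ := u[GPaux.kk u]'(GPaux.kk_lt hu0) with hσdef
    have key : ∀ (w : List X) (hw : w ≠ []),
        w[GPaux.kk w]'(GPaux.kk_lt hw) = σ →
        iW m (wordS w) = (iW m w).takeWhile fun y => decide (y ≠ σ) := by
      intro w hw hwσ
      rw [GPaux.iW_unfold hm' hw, GPaux.wordSigma_eq hw, hwσ,
        List.append_assoc, List.singleton_append]
      rw [GPaux.takeWhile_sandwich]
      · intro y hy
        have hyS : y ∈ wordS w := by
          have : y ∈ initPart (iW m (wordS w)) := GPaux.mem_initPart.mpr hy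
          rw [GPaux.initPart_iW] at this
          exact GPaux.mem_initPart.mp this
        have : y ≠ σ := by
          intro hyeq
          rw [hyeq, ← hwσ] at hyS
          exact GPaux.sigma_not_mem_wordS hw hyS
        simpa using this
      · simp
    rw [key u hu0 rfl, key v hv0 hσeq.symm, h]
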